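/- Let Ω ⊂ ℂⁿ be a C∞-smooth bounded pseudoconvex domain and φ ∈ C³(Ω̄). Then there exists ψ ∈ C²(Ω̄) such that ψ = φ on bΩ and the (0,1)-form ∂̄ψ belongs to dom(∂̄*), i.e. ∂̄ψ satisfies the ∂̄-Neumann compatibility condition ∑_{j=1}^n (∂ψ/∂z̄_j)(∂ρ/∂z_j) = 0 on bΩ, where ρ is a defining function for Ω. -/

import Mathlib

open MeasureTheory Complex
noncomputable section

/-- ℂⁿ with the Euclidean norm. -/
abbrev Cn (n : ℕ) := EuclideanSpace ℂ (Fin n)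

variable {n : ℕ}

/-- Wirtinger derivative `∂f/∂z_j` of `f` at `z`, computed within the set `s`. -/
def wdz (s : Set (Cn n)) (f : Cn n → ℂ) (z : Cn n) (j : Fin n) : ℂ :=
  (1/2 : ℂ) * (fderivWithin ℝ f s z (EuclideanSpace.single j 1)
    - Complex.I * fderivWithin ℝ f s z (EuclideanSpace.single j Complex.I))

/-- Wirtinger derivative `∂f/∂z̄_j` of `f` at `z`, computed within the set `s`. -/
def wdzbar (s : Set (Cn n)) (f : Cn n → ℂ) (z : Cn n) (j : Fin n) : ℂ :=
  (1/2 : ℂ) * (fderivWithin ℝ f s z (EuclideanSpace.single j 1)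
    + Complex.I * fderivWithin ℝ f s z (EuclideanSpace.single j Complex.I))

/-- `∂ρ/∂z_j` for a real-valued (everywhere smooth) function ρ. -/
def wdzR (ρ : Cn n → ℝ) (z : Cn n) (j : Fin n) : ℂ :=
  wdz Set.univ (fun v => (ρ v : ℂ)) z j

/-- A (connected, open, bounded) domain in ℂⁿ. -/
def IsBoundedDomain (Ω : Set (Cn n)) : Prop :=
  IsOpen Ω ∧ IsConnected Ω ∧ Bornology.IsBounded Ω

/-- ρ is a defining function for Ω : smooth, negative inside, vanishing with
nonvanishing gradient on the boundary. -/
def IsDefiningFunction (Ω : Set (Cn n)) (ρ : Cn n → ℝ) : Prop :=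
  ContDiff ℝ (⊤ : ℕ∞) ρ ∧ (∀ z ∈ Ω, ρ z < 0) ∧ (∀ z ∈ frontier Ω, ρ z = 0) ∧
    (∀ z ∈ frontier Ω, fderiv ℝ ρ z ≠ 0)

/-- Entries `∂²ρ/∂z_j∂z̄_k` of the complex Hessian of ρ. -/
def complexHessian (ρ : Cn n → ℝ) (p : Cn n) (j k : Fin n) : ℂ :=
  wdz Set.univ (fun w => wdzbar Set.univ (fun v => (ρ v : ℂ)) w k) p j

/-- The complex Hessian of ρ at p is positive definite on the complex tangent space at p
(strong pseudoconvexity at p). -/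
def StronglyPseudoconvexAt (ρ : Cn n → ℝ) (p : Cn n) : Prop :=
  ∀ t : Fin n → ℂ, t ≠ 0 → (∑ j, wdzR ρ p j * t j) = 0 →
    0 < (∑ j, ∑ k, complexHessian ρ p j k * t j * (starRingEnd ℂ) (t k)).re

/-- The complex Hessian of ρ at p is positive semidefinite on the complex tangent space at p
(pseudoconvexity at p). -/
def PseudoconvexAt (ρ : Cn n → ℝ) (p : Cn n) : Prop :=
  ∀ t : Fin n → ℂ, (∑ j, wdzR ρ p j * t j) = 0 →
    0 ≤ (∑ j, ∑ k, complexHessian ρ p j k * t j * (starRingEnd ℂ) (t k)).re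

lemma fderiv_ofReal_comp {ρ : Cn n → ℝ} (hρ : ContDiff ℝ (⊤ : ℕ∞) ρ) (z v : Cn n) :
    fderiv ℝ (fun v => ((ρ v : ℂ))) z v = ((fderiv ℝ ρ z v : ℝ) : ℂ) := by
  have h := (Complex.ofRealCLM.hasFDerivAt.comp z
    ((hρ.differentiable (by simp)) z).hasFDerivAt).fderiv
  rw [show (fun v => ((ρ v : ℂ))) = (Complex.ofRealCLM ∘ ρ) from rfl, h]
  rfl

lemma wdzR_eq {ρ : Cn n → ℝ} (hρ : ContDiff ℝ (⊤ : ℕ∞) ρ) (z : Cn n) (j : Fin n) :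
    wdzR ρ z j = (1/2 : ℂ) * (((fderiv ℝ ρ z (EuclideanSpace.single j 1) : ℝ) : ℂ)
      - Complex.I * ((fderiv ℝ ρ z (EuclideanSpace.single j Complex.I) : ℝ) : ℂ)) := by
  rw [wdzR, wdz, fderivWithin_univ, fderiv_ofReal_comp hρ, fderiv_ofReal_comp hρ]

lemma wdzbar_univ_conj {ρ : Cn n → ℝ} (hρ : ContDiff ℝ (⊤ : ℕ∞) ρ) (z : Cn n) (j : Fin n) :
    wdzbar Set.univ (fun v => ((ρ v : ℂ))) z j = (starRingEnd ℂ) (wdzR ρ z j) := by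
  rw [wdzbar, fderivWithin_univ, fderiv_ofReal_comp hρ, fderiv_ofReal_comp hρ, wdzR_eq hρ]
  simp [Complex.ext_iff]

lemma euclid_decomp (v : Cn n) :
    v = ∑ j, ((v j).re • EuclideanSpace.single j (1:ℂ)
      + (v j).im • EuclideanSpace.single j Complex.I) := by
  ext k
  rw [WithLp.ofLp_sum, Finset.sum_apply]
  simp only [PiLp.add_apply, PiLp.smul_apply, EuclideanSpace.single_apply,
    Complex.real_smul, smul_eq_mul, mul_ite, mul_one, mul_zero]
  rw [Finset.sum_congr rfl (fun j _ => show
      ((if k = j then ((v j).re:ℂ) else 0) + (if k = j then ((v j).im:ℂ) * Complex.I else 0))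
      = (if k = j then ((v j).re + (v j).im * Complex.I : ℂ) else 0) by split <;> simp)]
  simp [Complex.re_add_im]

lemma exists_wdzR_ne {ρ : Cn n → ℝ} (hρ : ContDiff ℝ (⊤ : ℕ∞) ρ) {z : Cn n}
    (hL : fderiv ℝ ρ z ≠ 0) : ∃ j, wdzR ρ z j ≠ 0 := by
  by_contra h
  push_neg at h
  apply hL
  have key : ∀ j, fderiv ℝ ρ z (EuclideanSpace.single j (1:ℂ)) = 0 ∧
      fderiv ℝ ρ z (EuclideanSpace.single j Complex.I) = 0 := by
    intro j
    have := h j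
    rw [wdzR_eq hρ] at this
    have h2 : (((fderiv ℝ ρ z (EuclideanSpace.single j 1) : ℝ) : ℂ)
      - Complex.I * ((fderiv ℝ ρ z (EuclideanSpace.single j Complex.I) : ℝ) : ℂ)) = 0 := by
      field_simp at this
      simpa using this
    rw [Complex.ext_iff] at h2
    simp at h2
    exact h2
  ext v
  rw [show v = ∑ j, ((v j).re • EuclideanSpace.single j (1:ℂ)
      + (v j).im • EuclideanSpace.single j Complex.I) from euclid_decomp v]
  simp [map_sum, (key _).1, (key _).2]

set_option maxHeartbeats 1000000 in
lemma uniqueDiffOn_closure_of_defining {Ω : Set (Cn n)} (hopen : IsOpen Ω)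
    {ρ : Cn n → ℝ} (hsm : ContDiff ℝ (⊤ : ℕ∞) ρ) (hneg : ∀ z ∈ Ω, ρ z < 0)
    (hfr0 : ∀ z ∈ frontier Ω, ρ z = 0) (hgrad : ∀ z ∈ frontier Ω, fderiv ℝ ρ z ≠ 0) :
    UniqueDiffOn ℝ (closure Ω) := by
  intro z hz
  by_cases hzΩ : z ∈ Ω
  · exact (hopen.uniqueDiffWithinAt hzΩ).mono subset_closure
  have hzf : z ∈ frontier Ω := hopen.frontier_eq ▸ ⟨hz, hzΩ⟩
  set L := fderiv ℝ ρ z with hLdef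
  have hL : L ≠ 0 := hgrad z hzf
  obtain ⟨w, hw⟩ : ∃ w, L w ≠ 0 := by
    by_contra h; push_neg at h
    exact hL (ContinuousLinearMap.ext fun w => by simp [h w])
  obtain ⟨v₀, hv₀⟩ : ∃ v₀ : Cn n, L v₀ < 0 := by
    rcases lt_or_gt_of_ne hw with h | h
    · exact ⟨w, h⟩
    · exact ⟨-w, by simpa using h⟩
  set c : ℝ := -(L v₀) with hc
  have hcpos : 0 < c := by simp only [hc]; linarith
  set M : ℝ := ‖v₀‖ + 1 with hM
  have hMpos : 0 < M := by positivity
  set ε : ℝ := min (c / (4 * (‖L‖ + 1))) 1 with hε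
  have hεpos : 0 < ε := lt_min (by positivity) one_pos
  have hcont : Continuous (fderiv ℝ ρ) := hsm.continuous_fderiv (by simp)
  have hUopen : IsOpen {y : Cn n | ‖fderiv ℝ ρ y - L‖ < c / (4 * M)} := by
    have heq : {y : Cn n | ‖fderiv ℝ ρ y - L‖ < c / (4 * M)}
        = (fderiv ℝ ρ) ⁻¹' Metric.ball L (c / (4 * M)) := by
      ext y; simp [Metric.mem_ball, dist_eq_norm]
    rw [heq]; exact Metric.isOpen_ball.preimage hcont
  obtain ⟨δ, hδpos, hδ⟩ := Metric.isOpen_iff.1 hUopen z (by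
    show ‖L - L‖ < c / (4 * M); simp only [Set.mem_setOf_eq, sub_self, norm_zero]; positivity)
  have hderiv_neg : ∀ y ∈ Metric.ball z δ, ∀ v ∈ Metric.closedBall v₀ ε,
      fderiv ℝ ρ y v < 0 := by
    intro y hy v hv
    have h1 : ‖fderiv ℝ ρ y - L‖ < c / (4 * M) := hδ hy
    have hvd : ‖v - v₀‖ ≤ ε := mem_closedBall_iff_norm.1 hv
    have hvnorm : ‖v‖ ≤ M := by
      have := norm_sub_norm_le v v₀
      have hε1 : ε ≤ 1 := min_le_right _ _
      simp only [hM]; linarith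
    have hLv : L v ≤ -c + ‖L‖ * ε := by
      have h2 : L v - L v₀ = L (v - v₀) := by rw [map_sub]
      have h3 : L (v - v₀) ≤ ‖L‖ * ε := by
        calc L (v - v₀) ≤ ‖L (v - v₀)‖ := le_abs_self _
          _ ≤ ‖L‖ * ‖v - v₀‖ := L.le_opNorm _
          _ ≤ ‖L‖ * ε := by nlinarith [norm_nonneg L]
      simp only [hc]; linarith
    have hLε : ‖L‖ * ε ≤ c / 4 := by
      have h4 : ε ≤ c / (4 * (‖L‖ + 1)) := min_le_left _ _
      have h5 : 0 ≤ ‖L‖ := norm_nonneg L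
      rw [le_div_iff₀ (by positivity)] at h4
      rw [le_div_iff₀ (by norm_num : (0:ℝ) < 4)]
      nlinarith
    have h6 : (fderiv ℝ ρ y - L) v ≤ c / 4 := by
      calc (fderiv ℝ ρ y - L) v ≤ ‖(fderiv ℝ ρ y - L) v‖ := le_abs_self _
        _ ≤ ‖fderiv ℝ ρ y - L‖ * ‖v‖ := (fderiv ℝ ρ y - L).le_opNorm _
        _ ≤ (c / (4 * M)) * M := by
            apply mul_le_mul (le_of_lt h1) hvnorm (norm_nonneg v)
            positivity
        _ = c / 4 := by
            have hM0 : M ≠ 0 := ne_of_gt hMpos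
            field_simp
    have h7 : fderiv ℝ ρ y v = L v + (fderiv ℝ ρ y - L) v := by simp
    rw [h7]; linarith
  set t₀ : ℝ := δ / (2 * M) with ht₀def
  have ht₀ : 0 < t₀ := by positivity
  have claimA : ∀ x ∈ Ω ∩ Metric.ball z (δ / 2), ∀ t ∈ Set.Icc (0:ℝ) t₀,
      ∀ v ∈ Metric.closedBall v₀ ε, x + t • v ∈ Ω := by
    rintro x ⟨hxΩ, hxball⟩ t ⟨ht0, htt₀⟩ v hv
    rcases eq_or_lt_of_le ht0 with rfl | htpos
    · simpa using hxΩ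
    have hvd : ‖v - v₀‖ ≤ ε := mem_closedBall_iff_norm.1 hv
    have hvnorm : ‖v‖ ≤ M := by
      have := norm_sub_norm_le v v₀
      have hε1 : ε ≤ 1 := min_le_right _ _
      simp only [hM]; linarith
    have hseg : ∀ s ∈ Set.Icc (0:ℝ) t, x + s • v ∈ Metric.ball z δ := by
      intro s ⟨hs0, hst⟩
      rw [mem_ball_iff_norm]
      have hxz : ‖x - z‖ < δ / 2 := mem_ball_iff_norm.1 hxball
      have : ‖x + s • v - z‖ ≤ ‖x - z‖ + s * ‖v‖ := by
        calc ‖x + s • v - z‖ = ‖(x - z) + s • v‖ := by rw [add_sub_right_comm]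
          _ ≤ ‖x - z‖ + ‖s • v‖ := norm_add_le _ _
          _ = ‖x - z‖ + |s| * ‖v‖ := by rw [norm_smul, Real.norm_eq_abs]
          _ = ‖x - z‖ + s * ‖v‖ := by rw [_root_.abs_of_nonneg hs0]
      have hsM : s * ‖v‖ ≤ δ / 2 := by
        have : s * ‖v‖ ≤ t₀ * M := by
          apply mul_le_mul (le_trans hst htt₀) hvnorm (norm_nonneg v) (le_of_lt ht₀)
        rw [ht₀def] at this
        calc s * ‖v‖ ≤ δ / (2 * M) * M := this
          _ = δ / 2 := by
            have hM0 : M ≠ 0 := ne_of_gt hMpos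
            field_simp
      linarith
    set g : ℝ → ℝ := fun s => ρ (x + s • v) with hgdef
    have hgderiv : ∀ s : ℝ, HasDerivAt g (fderiv ℝ ρ (x + s • v) v) s := by
      intro s
      have h1 : HasDerivAt (fun s : ℝ => x + s • v) v s := by
        simpa using ((hasDerivAt_id s).smul_const v).const_add x
      exact ((hsm.differentiable (by simp)) (x + s • v)).hasFDerivAt.comp_hasDerivAt s h1
    have hanti : StrictAntiOn g (Set.Icc 0 t) := by
      apply strictAntiOn_of_deriv_neg (convex_Icc 0 t)
      · exact (Continuous.continuousOn (by
          exact hsm.continuous.comp (by fun_prop)))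
      · intro s hs
        rw [interior_Icc] at hs
        rw [(hgderiv s).deriv]
        exact hderiv_neg _ (hseg s ⟨le_of_lt hs.1, le_of_lt hs.2⟩) v hv
    have hgneg : ∀ s ∈ Set.Icc (0:ℝ) t, ρ (x + s • v) < 0 := by
      intro s ⟨hs0, hst⟩
      rcases eq_or_lt_of_le hs0 with rfl | hspos
      · simpa using hneg x hxΩ
      have hg0 : g s < g 0 := hanti ⟨le_refl 0, le_of_lt htpos⟩ ⟨hs0, hst⟩ hspos
      have : g 0 = ρ x := by simp [hgdef]
      have hρx : ρ x < 0 := hneg x hxΩ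
      simpa [hgdef] using lt_trans hg0 (by rw [this]; exact hρx)
    by_contra hnot
    set f : ℝ → Cn n := fun s => x + s • v with hf
    have hfc : Continuous f := by fun_prop
    have hU : IsOpen (f ⁻¹' Ω) := hopen.preimage hfc
    have hV : IsOpen (f ⁻¹' (closure Ω)ᶜ) := isClosed_closure.isOpen_compl.preimage hfc
    have hnotin : ∀ s ∈ Set.Icc (0:ℝ) t, f s ∉ frontier Ω := by
      intro s hs hmem
      exact absurd (hfr0 _ hmem) (ne_of_lt (hgneg s hs))
    have hcover : Set.Icc (0:ℝ) t ⊆ f ⁻¹' Ω ∪ f ⁻¹' (closure Ω)ᶜ := by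
      intro s hs
      by_cases hm : f s ∈ Ω
      · exact Or.inl hm
      by_cases hm2 : f s ∈ closure Ω
      · exact absurd ⟨hm2, by rw [hopen.interior_eq]; exact hm⟩ (hnotin s hs)
      · exact Or.inr hm2
    have h0mem : (Set.Icc (0:ℝ) t ∩ f ⁻¹' Ω).Nonempty :=
      ⟨0, ⟨le_refl 0, le_of_lt htpos⟩, by simp [hf, hxΩ]⟩
    have htmem : (Set.Icc (0:ℝ) t ∩ f ⁻¹' (closure Ω)ᶜ).Nonempty := by
      refine ⟨t, ⟨le_of_lt htpos, le_refl t⟩, ?_⟩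
      intro hmem
      by_cases hm : f t ∈ Ω
      · exact hnot hm
      · exact hnotin t ⟨le_of_lt htpos, le_refl t⟩
          ⟨hmem, by rw [hopen.interior_eq]; exact hm⟩
    obtain ⟨s, _, hsU, hsV⟩ := isPreconnected_Icc _ _ hU hV hcover h0mem htmem
    exact hsV (subset_closure hsU)
  have hcone : ∀ t ∈ Set.Icc (0:ℝ) t₀, ∀ v ∈ Metric.closedBall v₀ ε,
      z + t • v ∈ closure Ω := by
    intro t ht v hv
    have hzcl : z ∈ closure (Ω ∩ Metric.ball z (δ / 2)) := by
      rw [mem_closure_iff_nhds] at hz ⊢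
      intro U hU
      obtain ⟨y, hy1, hy2⟩ := hz (U ∩ Metric.ball z (δ / 2))
        (Filter.inter_mem hU (Metric.ball_mem_nhds z (by positivity)))
      exact ⟨y, hy1.1, hy2, hy1.2⟩
    exact map_mem_closure (f := fun x => x + t • v) (by fun_prop) hzcl
      (fun x hx => claimA x hx t ht v hv)
  set B : Set (Cn n) := Metric.closedBall (z + t₀ • v₀) (t₀ * ε) with hB
  have hkey : ∀ w ∈ B, ∀ θ ∈ Set.Icc (0:ℝ) 1, z + θ • (w - z) ∈ closure Ω := by
    intro w hw θ hθ
    have hvmem : (t₀⁻¹) • (w - z) ∈ Metric.closedBall v₀ ε := by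
      rw [Metric.mem_closedBall, dist_eq_norm]
      have heq : (t₀⁻¹) • (w - z) - v₀ = (t₀⁻¹) • (w - (z + t₀ • v₀)) := by
        rw [smul_sub, smul_sub, smul_add, smul_smul, inv_mul_cancel₀ (ne_of_gt ht₀), one_smul]
        abel
      rw [heq, norm_smul, Real.norm_eq_abs, abs_of_pos (by positivity)]
      have hwb : ‖w - (z + t₀ • v₀)‖ ≤ t₀ * ε := mem_closedBall_iff_norm.1 hw
      calc t₀⁻¹ * ‖w - (z + t₀ • v₀)‖ ≤ t₀⁻¹ * (t₀ * ε) := by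
            apply mul_le_mul_of_nonneg_left hwb (by positivity)
        _ = ε := by field_simp
    have heq2 : z + θ • (w - z) = z + (θ * t₀) • ((t₀⁻¹) • (w - z)) := by
      rw [smul_smul, mul_assoc, mul_inv_cancel₀ (ne_of_gt ht₀), mul_one]
    rw [heq2]
    exact hcone (θ * t₀) ⟨mul_nonneg hθ.1 (le_of_lt ht₀), by nlinarith [hθ.1, hθ.2]⟩ _ hvmem
  have hBsub : B ⊆ closure Ω := by
    intro w hw
    have := hkey w hw 1 ⟨zero_le_one, le_refl 1⟩
    simpa using this
  set C : Set (Cn n) := convexHull ℝ (insert z B) with hC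
  have hBne : B.Nonempty := ⟨_, Metric.mem_closedBall_self (by positivity)⟩
  have hCsub : C ⊆ closure Ω := by
    intro p hp
    rw [hC, convexHull_insert hBne] at hp
    rw [mem_convexJoin] at hp
    obtain ⟨a, ha, b, hb, hseg⟩ := hp
    rw [(convex_closedBall _ _).convexHull_eq] at hb
    rw [Set.mem_singleton_iff] at ha
    subst ha
    rw [segment_eq_image'] at hseg
    obtain ⟨θ, hθ, rfl⟩ := hseg
    exact hkey b hb θ hθ
  have hConv : Convex ℝ C := convex_convexHull ℝ _
  have hint : (interior C).Nonempty := by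
    have hBC : B ⊆ C := (Set.subset_insert _ _).trans (subset_convexHull ℝ _)
    have hiB : (interior B).Nonempty := by
      rw [hB, interior_closedBall _ (by positivity : (t₀ * ε) ≠ 0)]
      exact ⟨_, Metric.mem_ball_self (by positivity)⟩
    exact hiB.mono (interior_mono hBC)
  have hzC : z ∈ C := subset_convexHull ℝ _ (Set.mem_insert _ _)
  exact (uniqueDiffWithinAt_convex hConv hint (subset_closure hzC)).mono hCsub

lemma contDiff_wdzR {ρ : Cn n → ℝ} (hρ : ContDiff ℝ (⊤ : ℕ∞) ρ) (j : Fin n) :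
    ContDiff ℝ (⊤ : ℕ∞) (fun z => wdzR ρ z j) := by
  have hfd : ContDiff ℝ (⊤ : ℕ∞) (fderiv ℝ ρ) := hρ.fderiv_right (by simp)
  have h1 : ContDiff ℝ (⊤ : ℕ∞) (fun z => fderiv ℝ ρ z (EuclideanSpace.single j (1:ℂ))) :=
    hfd.clm_apply contDiff_const
  have h2 : ContDiff ℝ (⊤ : ℕ∞) (fun z => fderiv ℝ ρ z (EuclideanSpace.single j Complex.I)) :=
    hfd.clm_apply contDiff_const
  have heq : (fun z => wdzR ρ z j) = fun z =>
      (1/2 : ℂ) * (((fderiv ℝ ρ z (EuclideanSpace.single j (1:ℂ)) : ℝ) : ℂ)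
        - Complex.I * ((fderiv ℝ ρ z (EuclideanSpace.single j Complex.I) : ℝ) : ℂ)) := by
    funext z; exact wdzR_eq hρ z j
  rw [heq]
  exact contDiff_const.mul ((Complex.ofRealCLM.contDiff.comp h1).sub
    (contDiff_const.mul (Complex.ofRealCLM.contDiff.comp h2)))

lemma contDiffOn_wdzbar {s : Set (Cn n)} (hs : UniqueDiffOn ℝ s) {f : Cn n → ℂ}
    (hf : ContDiffOn ℝ 3 f s) (j : Fin n) :
    ContDiffOn ℝ 2 (fun z => wdzbar s f z j) s := by
  have hfd : ContDiffOn ℝ 2 (fderivWithin ℝ f s) s := hf.fderivWithin hs (by norm_num)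
  have h1 : ContDiffOn ℝ 2 (fun z => fderivWithin ℝ f s z (EuclideanSpace.single j (1:ℂ))) s :=
    hfd.clm_apply contDiffOn_const
  have h2 : ContDiffOn ℝ 2 (fun z => fderivWithin ℝ f s z (EuclideanSpace.single j Complex.I)) s :=
    hfd.clm_apply contDiffOn_const
  exact contDiffOn_const.mul (h1.add (contDiffOn_const.mul h2))


set_option maxHeartbeats 1000000 in
/-- Let Ω ⊂ ℂⁿ be a C∞-smooth bounded pseudoconvex domain with defining
function ρ, and φ ∈ C³(Ω̄).  Then there exists ψ ∈ C²(Ω̄) with ψ = φ on bΩ such that ∂̄ψ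
satisfies the ∂̄-Neumann compatibility condition ∑_j (∂ψ/∂z̄_j)(∂ρ/∂z_j) = 0 on bΩ,
i.e. ∂̄ψ ∈ dom(∂̄*). -/
theorem exists_boundary_correction
    (Ω : Set (Cn n)) (hΩ : IsBoundedDomain Ω)
    (ρ : Cn n → ℝ) (hρ : IsDefiningFunction Ω ρ)
    (hpsc : ∀ p ∈ frontier Ω, PseudoconvexAt ρ p)
    (φ : Cn n → ℂ) (hφ : ContDiffOn ℝ 3 φ (closure Ω)) :
    ∃ ψ : Cn n → ℂ, ContDiffOn ℝ 2 ψ (closure Ω) ∧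
      (∀ z ∈ frontier Ω, ψ z = φ z) ∧
      (∀ z ∈ frontier Ω, ∑ j, wdzbar (closure Ω) ψ z j * wdzR ρ z j = 0) := by
  obtain ⟨hopen, hconn, hbdd⟩ := hΩ
  obtain ⟨hsm, hneg, hfr0, hgrad⟩ := hρ
  have hUD : UniqueDiffOn ℝ (closure Ω) :=
    uniqueDiffOn_closure_of_defining hopen hsm hneg hfr0 hgrad
  set S : Cn n → ℂ := fun z => ∑ j, wdzbar (closure Ω) φ z j * wdzR ρ z j with hS
  set u : Cn n → ℝ := fun z => ∑ j, Complex.normSq (wdzR ρ z j) with hu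
  set G : Cn n → ℝ := fun z => u z / (u z ^ 2 + ρ z ^ 2) with hG
  set h : Cn n → ℂ := fun z => -(S z) * ((G z : ℝ) : ℂ) with hh
  -- positivity of u on the frontier
  have hu_nonneg : ∀ z, 0 ≤ u z := fun z =>
    Finset.sum_nonneg fun j _ => Complex.normSq_nonneg _
  have hu_pos : ∀ z ∈ frontier Ω, 0 < u z := by
    intro z hz
    rcases exists_wdzR_ne hsm (hgrad z hz) with ⟨j, hj⟩
    have : 0 < Complex.normSq (wdzR ρ z j) := by
      rcases (Complex.normSq_pos (z := wdzR ρ z j)).2 hj with h'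
      exact h'
    exact lt_of_lt_of_le this (Finset.single_le_sum
      (fun k _ => Complex.normSq_nonneg _) (Finset.mem_univ j))
  -- denominator nonvanishing on the closure
  have hfrontier_eq : frontier Ω = closure Ω \ Ω := hopen.frontier_eq
  have hden : ∀ z ∈ closure Ω, u z ^ 2 + ρ z ^ 2 ≠ 0 := by
    intro z hz
    by_cases hzΩ : z ∈ Ω
    · exact ne_of_gt (by nlinarith [sq_nonneg (u z), hneg z hzΩ])
    · have hzf : z ∈ frontier Ω := hfrontier_eq ▸ ⟨hz, hzΩ⟩
      exact ne_of_gt (by nlinarith [sq_nonneg (ρ z), hu_pos z hzf])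
  -- smoothness of the ingredients
  have hu_sm : ContDiff ℝ (⊤ : ℕ∞) u := by
    apply ContDiff.sum
    intro j _
    have hw := contDiff_wdzR hsm j
    have hre : ContDiff ℝ (⊤ : ℕ∞) (fun z => (wdzR ρ z j).re) := Complex.reCLM.contDiff.comp hw
    have him : ContDiff ℝ (⊤ : ℕ∞) (fun z => (wdzR ρ z j).im) := Complex.imCLM.contDiff.comp hw
    have : (fun z => Complex.normSq (wdzR ρ z j)) = fun z =>
        (wdzR ρ z j).re * (wdzR ρ z j).re + (wdzR ρ z j).im * (wdzR ρ z j).im := by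
      funext z; rw [Complex.normSq_apply]
    rw [this]
    exact (hre.mul hre).add (him.mul him)
  have hS_sm : ContDiffOn ℝ 2 S (closure Ω) := by
    apply ContDiffOn.sum
    intro j _
    exact (contDiffOn_wdzbar hUD hφ j).mul ((contDiff_wdzR hsm j).of_le (by exact WithTop.coe_le_coe.mpr (le_top : (2:ℕ∞) ≤ ⊤))).contDiffOn
  have hG_sm : ContDiffOn ℝ 2 G (closure Ω) := by
    apply ContDiffOn.div
    · exact (hu_sm.of_le (by exact WithTop.coe_le_coe.mpr (le_top : (2:ℕ∞) ≤ ⊤))).contDiffOn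
    · exact (((hu_sm.pow 2).add (hsm.pow 2)).of_le (by exact WithTop.coe_le_coe.mpr (le_top : (2:ℕ∞) ≤ ⊤))).contDiffOn
    · exact hden
  have hh_sm : ContDiffOn ℝ 2 h (closure Ω) := by
    apply ContDiffOn.mul
    · exact hS_sm.neg
    · exact Complex.ofRealCLM.contDiff.comp_contDiffOn hG_sm
  have hψ_sm : ContDiffOn ℝ 2 (fun z => φ z + ((ρ z : ℝ) : ℂ) * h z) (closure Ω) := by
    apply ContDiffOn.add
    · exact hφ.of_le (by norm_num)
    · exact ((Complex.ofRealCLM.contDiff.comp hsm).of_le (by exact WithTop.coe_le_coe.mpr (le_top : (2:ℕ∞) ≤ ⊤))).contDiffOn.mul hh_sm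
  refine ⟨fun z => φ z + ((ρ z : ℝ) : ℂ) * h z, hψ_sm, ?_, ?_⟩
  · intro z hz
    simp [hfr0 z hz]
  intro z hz
  have hzc : z ∈ closure Ω := frontier_subset_closure hz
  have hud : UniqueDiffWithinAt ℝ (closure Ω) z := hUD z hzc
  have hρz : ρ z = 0 := hfr0 z hz
  have huz : u z ≠ 0 := ne_of_gt (hu_pos z hz)
  -- differentiability facts
  have hφd : DifferentiableWithinAt ℝ φ (closure Ω) z :=
    (hφ.differentiableOn (by norm_num)) z hzc
  have hρdA : DifferentiableAt ℝ (fun v => ((ρ v : ℝ) : ℂ)) z :=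
    (Complex.ofRealCLM.contDiff.comp hsm).differentiable (by simp) z
  have hρd : DifferentiableWithinAt ℝ (fun v => ((ρ v : ℝ) : ℂ)) (closure Ω) z :=
    hρdA.differentiableWithinAt
  have hhd : DifferentiableWithinAt ℝ h (closure Ω) z :=
    (hh_sm.differentiableOn (by norm_num)) z hzc
  -- derivative of ψ within the closure
  have hDψ : fderivWithin ℝ (fun z => φ z + ((ρ z : ℝ) : ℂ) * h z) (closure Ω) z
      = fderivWithin ℝ φ (closure Ω) z + h z • fderiv ℝ (fun v => ((ρ v : ℝ) : ℂ)) z := by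
    rw [show (fun z => φ z + ((ρ z : ℝ) : ℂ) * h z) = φ + (fun v => ((ρ v : ℝ) : ℂ)) * h from rfl]
    rw [fderivWithin_add hud hφd (hρd.mul hhd)]
    rw [fderivWithin_mul hud hρd hhd]
    rw [hρz]
    rw [hρdA.fderivWithin hud]
    simp
    ext v; simp
  have hwb : ∀ j, wdzbar (closure Ω) (fun z => φ z + ((ρ z : ℝ) : ℂ) * h z) z j
      = wdzbar (closure Ω) φ z j + h z * (starRingEnd ℂ) (wdzR ρ z j) := by
    intro j
    have hconj := wdzbar_univ_conj hsm z j
    rw [wdzbar, fderivWithin_univ] at hconj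
    rw [wdzbar, wdzbar, hDψ]
    simp only [ContinuousLinearMap.add_apply, ContinuousLinearMap.smul_apply, smul_eq_mul]
    rw [← hconj]
    ring
  -- the final computation
  have hcast : ((u z : ℝ) : ℂ) = ∑ j, (starRingEnd ℂ) (wdzR ρ z j) * wdzR ρ z j := by
    rw [hu]
    push_cast
    exact Finset.sum_congr rfl fun j _ => by
      rw [mul_comm, Complex.mul_conj]
  calc ∑ j, wdzbar (closure Ω) (fun z => φ z + ((ρ z : ℝ) : ℂ) * h z) z j * wdzR ρ z j
      = ∑ j, (wdzbar (closure Ω) φ z j + h z * (starRingEnd ℂ) (wdzR ρ z j)) * wdzR ρ z j := by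
        exact Finset.sum_congr rfl fun j _ => by rw [hwb j]
    _ = S z + h z * ∑ j, (starRingEnd ℂ) (wdzR ρ z j) * wdzR ρ z j := by
        rw [hS]
        rw [Finset.mul_sum]
        rw [← Finset.sum_add_distrib]
        exact Finset.sum_congr rfl fun j _ => by ring
    _ = S z + h z * ((u z : ℝ) : ℂ) := by rw [hcast]
    _ = 0 := by
        simp only [hh, hG, hρz]
        have : ((u z : ℝ) : ℂ) ≠ 0 := by
          simpa using huz
        field_simp
        have hu2 : ((u z / (u z ^ 2 + 0 ^ 2) : ℝ) : ℂ) * ((u z : ℝ) : ℂ) = 1 := by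
          push_cast; field_simp; ring
        rw [hu2]; ring
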